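/- Assume the PACA setting with the Slater condition, and suppose the PACA sequence (xᵏ) is infinite (xᵏ ∉ C for all k). Then the sequence (dist(xᵏ, C)) converges R-linearly to 0, i.e. limsup_{k→∞} dist(xᵏ, C)^{1/k} < 1. -/

import Mathlib

/-!
Once `ε k` is below half the Slater margin `δ`, the Slater point lies in every
`C k = {z | ∀ i, f i z ≤ -ε k}`. Each `v i k` is the step from `x k` to its projection onto a
half-space containing `C k`, so the extrapolated averaged step decreases `‖x k - z‖ ^ 2` by at
least `S k = meanSqNorm (v · k)` for every `z ∈ C k`. Hence the iterates, and with them the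
subgradients, stay bounded, and the Slater error bound turns this into
`S k ≥ β * dist (x k, C k) ^ 2`. As the sets `C k` increase, `dist (x k, C k) ^ 2` contracts by the
factor `1 - β`, and `dist (x k, C) ≤ dist (x k, C k)`.
-/

open Filter Metric Set
open scoped RealInnerProductSpace

def sublevel {ι E : Type*} (f : ι → E → ℝ) (c : ℝ) : Set E := {z | ∀ i, f i z ≤ c}

section Sublevel

variable {ι E : Type*} {f : ι → E → ℝ}

theorem sublevel_mono {c c' : ℝ} (h : c ≤ c') : sublevel f c ⊆ sublevel f c' :=
  fun _ hz i => (hz i).trans h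

theorem isClosed_sublevel [TopologicalSpace E] (hf : ∀ i, Continuous (f i)) (c : ℝ) :
    IsClosed (sublevel f c) := by
  simp only [sublevel, ofPred_forall]
  exact isClosed_iInter fun i => isClosed_le (hf i) continuous_const

/-- Slater-type error bound: the point `(1 - t) • x + t • y` with `t = p / (p + η)` lies in the
sublevel set. -/
theorem infDist_sublevel_le [NormedAddCommGroup E] [NormedSpace ℝ E]
    (hf : ∀ i, ConvexOn ℝ univ (f i)) {x y : E} {c η p : ℝ} (hη : 0 < η) (hp : 0 ≤ p)
    (hy : ∀ i, f i y ≤ c - η) (hx : ∀ i, f i x ≤ c + p) :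
    infDist x (sublevel f c) ≤ p / η * ‖x - y‖ := by
  set t := p / (p + η)
  have hpη : 0 < p + η := by linarith
  have ht0 : 0 ≤ t := by positivity
  have ht1 : t ≤ 1 := (div_le_one hpη).2 (by linarith)
  have hmem : (1 - t) • x + t • y ∈ sublevel f c := fun i => calc
    f i ((1 - t) • x + t • y) ≤ (1 - t) * f i x + t * f i y :=
      (hf i).2 (mem_univ x) (mem_univ y) (by linarith) ht0 (by ring)
    _ ≤ (1 - t) * (c + p) + t * (c - η) := by
      have h1t : 0 ≤ 1 - t := by linarith
      gcongr
      exacts [hx i, hy i]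
    _ = c := by simp only [t]; field_simp; ring
  calc infDist x (sublevel f c) ≤ dist x ((1 - t) • x + t • y) := infDist_le_dist_of_mem hmem
    _ = t * ‖x - y‖ := by
      rw [dist_eq_norm, show x - ((1 - t) • x + t • y) = t • (x - y) by module, norm_smul,
        Real.norm_of_nonneg ht0]
    _ ≤ p / η * ‖x - y‖ := by gcongr; exact div_le_div_of_nonneg_left hp hη (by linarith)

end Sublevel

theorem infDist_sq_le_of_forall_dist_sq_le {α : Type*} [PseudoMetricSpace α] [ProperSpace α]
    {s : Set α} {x y : α} {S : ℝ} (hs : IsClosed s) (hne : s.Nonempty)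
    (h : ∀ z ∈ s, dist y z ^ 2 ≤ dist x z ^ 2 - S) :
    infDist y s ^ 2 ≤ infDist x s ^ 2 - S := by
  obtain ⟨z, hz, hxz⟩ := hs.exists_infDist_eq_dist hne x
  calc infDist y s ^ 2 ≤ dist y z ^ 2 := by
        gcongr
        exacts [infDist_nonneg, infDist_le_dist_of_mem hz]
    _ ≤ infDist x s ^ 2 - S := hxz ▸ h z hz

theorem norm_div_norm_sq_smul {E : Type*} [NormedAddCommGroup E] [NormedSpace ℝ E] (c : ℝ)
    (u : E) : ‖(c / ‖u‖ ^ 2) • u‖ = |c| / ‖u‖ := by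
  rcases eq_or_ne ‖u‖ 0 with hu | hu
  · simp [hu]
  · rw [norm_smul, norm_div, norm_pow, norm_norm, Real.norm_eq_abs]
    field_simp

section InnerProductSpace

variable {E : Type*} [NormedAddCommGroup E] [InnerProductSpace ℝ E]

/-- `x - (max 0 a / ‖u‖ ^ 2) • u` is the projection of `x` onto the half-space
`{z | a ≤ ⟪u, x - z⟫}`; this is the projection inequality for a point `z = x - y` of it. -/
theorem norm_sq_le_inner_of_le_inner {a : ℝ} {u y : E} (h : a ≤ ⟪u, y⟫) :
    ‖(max 0 a / ‖u‖ ^ 2) • u‖ ^ 2 ≤ ⟪(max 0 a / ‖u‖ ^ 2) • u, y⟫ := by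
  rcases le_or_gt a 0 with ha | ha
  · simp [max_eq_left ha]
  have hu : u ≠ 0 := by rintro rfl; simp at h; linarith
  have hu2 : 0 < ‖u‖ ^ 2 := by positivity
  rw [max_eq_right ha.le, norm_smul, mul_pow, real_inner_smul_left, Real.norm_eq_abs, sq_abs]
  calc (a / ‖u‖ ^ 2) ^ 2 * ‖u‖ ^ 2 = a / ‖u‖ ^ 2 * a := by field_simp
    _ ≤ a / ‖u‖ ^ 2 * ⟪u, y⟫ := by gcongr

theorem norm_sub_smul_sub_sq_le {x z w : E} {S : ℝ} (hS : 0 < S) (hw : ‖w‖ ^ 2 ≤ S)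
    (hinner : S ≤ ⟪w, x - z⟫) : ‖x - (S / ‖w‖ ^ 2) • w - z‖ ^ 2 ≤ ‖x - z‖ ^ 2 - S := by
  have hw0 : w ≠ 0 := by rintro rfl; simp at hinner; linarith
  have hw2 : 0 < ‖w‖ ^ 2 := by positivity
  set α := S / ‖w‖ ^ 2
  have hα : 1 ≤ α := (one_le_div hw2).2 hw
  have hαw : α ^ 2 * ‖w‖ ^ 2 = α * S := by simp only [α]; field_simp
  rw [show x - α • w - z = (x - z) - α • w by abel, norm_sub_sq_real, real_inner_smul_right,
    norm_smul, Real.norm_of_nonneg (by positivity), mul_pow, hαw, real_inner_comm]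
  nlinarith

theorem norm_le_two_mul_of_subgradient {f : E → ℝ} {x u : E} {C : ℝ}
    (hsub : ∀ z, f x + ⟪u, z - x⟫ ≤ f z) (hC : ∀ z ∈ closedBall x 1, |f z| ≤ C) :
    ‖u‖ ≤ 2 * C := by
  have hx := abs_le.1 (hC x (mem_closedBall_self zero_le_one))
  rcases eq_or_ne u 0 with rfl | hu
  · simp only [norm_zero]; linarith
  set z := x + ‖u‖⁻¹ • u
  have hz : z ∈ closedBall x 1 := by
    rw [mem_closedBall, dist_eq_norm, add_sub_cancel_left, norm_smul, norm_inv, norm_norm,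
      inv_mul_cancel₀ (norm_ne_zero_iff.2 hu)]
  have hinner : ⟪u, z - x⟫ = ‖u‖ := by
    rw [add_sub_cancel_left, real_inner_smul_right, real_inner_self_eq_norm_sq]
    field_simp
  have := hsub z
  linarith [(abs_le.1 (hC z hz)).2]

theorem exists_norm_subgradient_le [ProperSpace E] {ι : Type*} [Fintype ι] {f : ι → E → ℝ}
    (hf : ∀ i, Continuous (f i)) (c : E) (R : ℝ) :
    ∃ L > 0, ∀ i, ∀ x ∈ closedBall c R, ∀ u : E,
      (∀ z, f i x + ⟪u, z - x⟫ ≤ f i z) → ‖u‖ ≤ L := by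
  obtain ⟨C, hC⟩ := (isCompact_closedBall c (R + 1)).exists_bound_of_continuousOn
    (continuous_pi hf).continuousOn
  refine ⟨max (2 * C) 1, one_pos.trans_le (le_max_right _ _), fun i x hx u hsub => ?_⟩
  refine (norm_le_two_mul_of_subgradient hsub fun z hz => ?_).trans (le_max_left _ _)
  have hz' : z ∈ closedBall c (R + 1) :=
    closedBall_subset_closedBall' (by rw [mem_closedBall] at hx; linarith) hz
  exact (norm_le_pi_norm (fun i => f i z) i).trans (hC z hz')

end InnerProductSpace

section Mean

variable {E : Type*} [NormedAddCommGroup E] {ι : Type*} [Fintype ι]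

noncomputable def meanSqNorm (v : ι → E) : ℝ := (Fintype.card ι : ℝ)⁻¹ * ∑ i, ‖v i‖ ^ 2

theorem norm_sq_div_card_le_meanSqNorm (v : ι → E) (i : ι) :
    ‖v i‖ ^ 2 / Fintype.card ι ≤ meanSqNorm v := by
  rw [meanSqNorm, div_eq_inv_mul]
  gcongr
  exact Finset.single_le_sum (f := fun j => ‖v j‖ ^ 2) (fun j _ => by positivity)
    (Finset.mem_univ i)

noncomputable def meanVec [Module ℝ E] (v : ι → E) : E := (Fintype.card ι : ℝ)⁻¹ • ∑ i, v i

theorem norm_meanVec_sq_le [NormedSpace ℝ E] (v : ι → E) : ‖meanVec v‖ ^ 2 ≤ meanSqNorm v := by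
  set c : ℝ := (Fintype.card ι : ℝ)⁻¹
  calc ‖meanVec v‖ ^ 2 ≤ (c * ∑ i, ‖v i‖) ^ 2 := by
        rw [meanVec, norm_smul, Real.norm_of_nonneg (by positivity)]
        gcongr
        exact norm_sum_le _ _
    _ = c ^ 2 * (∑ i, ‖v i‖) ^ 2 := mul_pow _ _ _
    _ ≤ c ^ 2 * (Fintype.card ι * ∑ i, ‖v i‖ ^ 2) := by
        gcongr
        exact sq_sum_le_card_mul_sum_sq
    _ = meanSqNorm v := by
        rcases eq_or_ne (Fintype.card ι : ℝ) 0 with h | h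
        · simp [c, meanSqNorm, h]
        · simp only [c, meanSqNorm]; field_simp

theorem meanSqNorm_le_inner_meanVec [InnerProductSpace ℝ E] {v : ι → E} {y : E}
    (h : ∀ i, ‖v i‖ ^ 2 ≤ ⟪v i, y⟫) : meanSqNorm v ≤ ⟪meanVec v, y⟫ := by
  rw [meanSqNorm, meanVec, real_inner_smul_left, sum_inner]
  gcongr with i
  exact h i

end Mean

theorem exists_le_mul_pow_of_sq_succ_le {d : ℕ → ℝ} (hd : ∀ k, 0 ≤ d k) {β : ℝ} (hβ : 0 < β)
    {K : ℕ} (h : ∀ k ≥ K, d (k + 1) ^ 2 ≤ (1 - β) * d k ^ 2) :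
    ∃ A > 0, ∃ r, 0 < r ∧ r < 1 ∧ ∀ k ≥ K, d k ≤ A * r ^ k := by
  set q := 1 - min β (1 / 2)
  have hq0 : 0 < q := by have := min_le_right β (1 / 2); linarith
  have hq1 : q < 1 := by have := lt_min hβ one_half_pos; linarith
  set r := √q
  have hr0 : 0 < r := Real.sqrt_pos.2 hq0
  have hr1 : r < 1 := (Real.sqrt_lt' one_pos).2 (by rwa [one_pow])
  have hstep : ∀ k ≥ K, d (k + 1) ≤ r * d k := fun k hk =>
    (sq_le_sq₀ (hd _) (mul_nonneg hr0.le (hd k))).1 <| calc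
      d (k + 1) ^ 2 ≤ (1 - β) * d k ^ 2 := h k hk
      _ ≤ q * d k ^ 2 := by gcongr; linarith [min_le_left β (1 / 2)]
      _ = (r * d k) ^ 2 := by rw [mul_pow, Real.sq_sqrt hq0.le]
  have hrK : 0 < r ^ K := pow_pos hr0 K
  refine ⟨d K / r ^ K + 1, add_pos_of_nonneg_of_pos (div_nonneg (hd K) hrK.le) one_pos,
    r, hr0, hr1, fun k hk => ?_⟩
  induction k, hk using Nat.le_induction with
  | base => rw [add_mul, div_mul_cancel₀ _ hrK.ne', one_mul]; linarith
  | succ k hk ih => calc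
      d (k + 1) ≤ r * d k := hstep k hk
      _ ≤ r * ((d K / r ^ K + 1) * r ^ k) := by gcongr
      _ = (d K / r ^ K + 1) * r ^ (k + 1) := by ring

theorem limsup_rpow_inv_lt_one_of_le_mul_pow {e : ℕ → ℝ} (he : ∀ k, 0 ≤ e k) {A r : ℝ}
    (hA : 0 < A) (hr0 : 0 < r) (hr1 : r < 1) (h : ∀ᶠ k in atTop, e k ≤ A * r ^ k) :
    limsup (fun k => e k ^ (1 / (k : ℝ))) atTop < 1 := by
  obtain ⟨c, hrc, hc1⟩ := exists_between hr1
  have hAroot : Tendsto (fun k : ℕ => A ^ (1 / (k : ℝ))) atTop (nhds 1) := by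
    simpa [Function.comp_def] using ((Real.continuousAt_const_rpow hA.ne').tendsto.comp
      tendsto_one_div_atTop_nhds_zero_nat)
  have hev : ∀ᶠ k : ℕ in atTop, e k ^ (1 / (k : ℝ)) ≤ c := by
    filter_upwards [hAroot.eventually_lt_const ((one_lt_div hr0).2 hrc), h,
      eventually_ge_atTop 1] with k hAk hk hk1
    have hk0 : (k : ℝ) ≠ 0 := by positivity
    calc e k ^ (1 / (k : ℝ)) ≤ (A * r ^ k) ^ (1 / (k : ℝ)) := by gcongr; exact he k
      _ = A ^ (1 / (k : ℝ)) * r := by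
        rw [Real.mul_rpow hA.le (by positivity), ← Real.rpow_natCast r k,
          ← Real.rpow_mul hr0.le, mul_one_div_cancel hk0, Real.rpow_one]
      _ ≤ c / r * r := by gcongr
      _ = c := div_mul_cancel₀ c hr0.ne'
  have hcobdd : IsCoboundedUnder (· ≤ ·) atTop (fun k : ℕ => e k ^ (1 / (k : ℝ))) :=
    isCoboundedUnder_le_of_eventually_le atTop
      (Eventually.of_forall fun k => Real.rpow_nonneg (he k) _)
  exact (limsup_le_of_le hcobdd hev).trans_lt hc1

structure IsPACA {E ι : Type*} [NormedAddCommGroup E] [InnerProductSpace ℝ E] [Fintype ι]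
    (f : ι → E → ℝ) (ε : ℕ → ℝ) (x : ℕ → E) (u v : ι → ℕ → E) (w : ℕ → E) : Prop where
  subgradient : ∀ i k z, f i (x k) + ⟪u i k, z - x k⟫ ≤ f i z
  v_eq : ∀ i k, v i k = (max 0 (f i (x k) + ε k) / ‖u i k‖ ^ 2) • u i k
  w_eq : ∀ k, w k = meanVec (v · k)
  step : ∀ k, w k ≠ 0 → x (k + 1) = x k - (meanSqNorm (v · k) / ‖w k‖ ^ 2) • w k

namespace IsPACA

variable {E ι : Type*} [NormedAddCommGroup E] [InnerProductSpace ℝ E] [Fintype ι]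
  {f : ι → E → ℝ} {ε : ℕ → ℝ} {x : ℕ → E} {u v : ι → ℕ → E} {w : ℕ → E} {k : ℕ} {z : E}

theorem add_le_inner (h : IsPACA f ε x u v w) (hz : z ∈ sublevel f (-ε k)) (i : ι) :
    f i (x k) + ε k ≤ ⟪u i k, x k - z⟫ := by
  have := h.subgradient i k z
  rw [← neg_sub, inner_neg_right] at this
  linarith [hz i]

theorem u_ne_zero (h : IsPACA f ε x u v w) (hz : z ∈ sublevel f (-ε k)) {i : ι}
    (hi : 0 < f i (x k) + ε k) : u i k ≠ 0 := by
  intro hu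
  have := h.add_le_inner hz i
  rw [hu, inner_zero_left] at this
  linarith

theorem norm_v_eq (h : IsPACA f ε x u v w) (i : ι) (k : ℕ) :
    ‖v i k‖ = max 0 (f i (x k) + ε k) / ‖u i k‖ := by
  rw [h.v_eq, norm_div_norm_sq_smul, abs_of_nonneg (le_max_left _ _)]

theorem meanSqNorm_pos (h : IsPACA f ε x u v w) (hz : z ∈ sublevel f (-ε k)) {i : ι}
    (hi : 0 < f i (x k) + ε k) : 0 < meanSqNorm (v · k) := by
  have hv : 0 < ‖v i k‖ := by
    rw [h.norm_v_eq, max_eq_right hi.le]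
    exact div_pos hi (norm_pos_iff.2 (h.u_ne_zero hz hi))
  have : 0 < (Fintype.card ι : ℝ) := Nat.cast_pos.2 (Fintype.card_pos_iff.2 ⟨i⟩)
  exact (div_pos (pow_pos hv 2) this).trans_le (norm_sq_div_card_le_meanSqNorm (v · k) i)

theorem norm_sub_sq_succ_le (h : IsPACA f ε x u v w) (hz : z ∈ sublevel f (-ε k)) {i : ι}
    (hi : 0 < f i (x k) + ε k) :
    ‖x (k + 1) - z‖ ^ 2 ≤ ‖x k - z‖ ^ 2 - meanSqNorm (v · k) := by
  have hS := h.meanSqNorm_pos hz hi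
  have hinner : meanSqNorm (v · k) ≤ ⟪w k, x k - z⟫ := h.w_eq k ▸
    meanSqNorm_le_inner_meanVec fun i =>
      h.v_eq i k ▸ norm_sq_le_inner_of_le_inner (h.add_le_inner hz i)
  have hw : w k ≠ 0 := by rintro hw; rw [hw, inner_zero_left] at hinner; linarith
  rw [h.step k hw]
  exact norm_sub_smul_sub_sq_le hS (h.w_eq k ▸ norm_meanVec_sq_le _) hinner

theorem norm_sub_le (h : IsPACA f ε x u v w) {K : ℕ} (hz : ∀ k ≥ K, z ∈ sublevel f (-ε k))
    (hact : ∀ k, ∃ i, 0 < f i (x k) + ε k) : ∀ k ≥ K, ‖x k - z‖ ≤ ‖x K - z‖ := by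
  intro k hk
  induction k, hk using Nat.le_induction with
  | base => rfl
  | succ k hk ih =>
    obtain ⟨i, hi⟩ := hact k
    refine le_trans ((sq_le_sq₀ (norm_nonneg _) (norm_nonneg _)).1 ?_) ih
    linarith [h.norm_sub_sq_succ_le (hz k hk) hi, h.meanSqNorm_pos (hz k hk) hi]

theorem infDist_sq_succ_le [ProperSpace E] (h : IsPACA f ε x u v w)
    (hf : ∀ i, Continuous (f i)) (hε : ε (k + 1) ≤ ε k) (hne : (sublevel f (-ε k)).Nonempty)
    (hact : ∃ i, 0 < f i (x k) + ε k) :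
    infDist (x (k + 1)) (sublevel f (-ε (k + 1))) ^ 2 ≤
      infDist (x k) (sublevel f (-ε k)) ^ 2 - meanSqNorm (v · k) := by
  obtain ⟨i, hi⟩ := hact
  calc infDist (x (k + 1)) (sublevel f (-ε (k + 1))) ^ 2
      ≤ infDist (x (k + 1)) (sublevel f (-ε k)) ^ 2 := by
        gcongr
        exacts [infDist_nonneg, infDist_le_infDist_of_subset (sublevel_mono (by linarith)) hne]
    _ ≤ _ := infDist_sq_le_of_forall_dist_sq_le (isClosed_sublevel hf _) hne fun z hz => by
        simpa only [dist_eq_norm] using h.norm_sub_sq_succ_le hz hi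

/-- With `p` the largest residual `f j (x k) + ε k`, the error bound gives
`infDist (x k) (sublevel f (-ε k)) ≤ 2 * R / δ * p`, while `(p / L) ^ 2 / card ι ≤ meanSqNorm`. -/
theorem mul_infDist_sq_le_meanSqNorm (h : IsPACA f ε x u v w)
    (hconv : ∀ i, ConvexOn ℝ univ (f i)) {xhat : E} {δ R L : ℝ} (hδ : 0 < δ) (hR : 0 < R)
    (hL : 0 < L) (hxhat : ∀ i, f i xhat ≤ -δ) (hεk : ε k ≤ δ / 2) (hxR : ‖x k - xhat‖ ≤ R)
    (huL : ∀ i, ‖u i k‖ ≤ L) (hact : ∃ i, 0 < f i (x k) + ε k) :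
    δ ^ 2 / (4 * Fintype.card ι * R ^ 2 * L ^ 2) * infDist (x k) (sublevel f (-ε k)) ^ 2 ≤
      meanSqNorm (v · k) := by
  obtain ⟨i, hi⟩ := hact
  have : Nonempty ι := ⟨i⟩
  obtain ⟨j, hj⟩ := Finite.exists_max fun i => f i (x k) + ε k
  set p := f j (x k) + ε k
  have hp : 0 < p := hi.trans_le (hj i)
  have hxhatC : xhat ∈ sublevel f (-ε k) := fun i => by linarith [hxhat i]
  have hD : infDist (x k) (sublevel f (-ε k)) ≤ 2 * R / δ * p := calc
    infDist (x k) (sublevel f (-ε k)) ≤ p / (δ / 2) * ‖x k - xhat‖ :=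
      infDist_sublevel_le hconv (half_pos hδ) hp.le (fun i => by linarith [hxhat i])
        (fun i => by linarith [hj i])
    _ ≤ p / (δ / 2) * R := by gcongr
    _ = 2 * R / δ * p := by ring
  have hv : p / L ≤ ‖v j k‖ := by
    rw [h.norm_v_eq, max_eq_right hp.le]
    exact div_le_div_of_nonneg_left hp.le (norm_pos_iff.2 (h.u_ne_zero hxhatC hp)) (huL j)
  have hcard : 0 < (Fintype.card ι : ℝ) := Nat.cast_pos.2 Fintype.card_pos
  calc δ ^ 2 / (4 * Fintype.card ι * R ^ 2 * L ^ 2) * infDist (x k) (sublevel f (-ε k)) ^ 2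
      ≤ δ ^ 2 / (4 * Fintype.card ι * R ^ 2 * L ^ 2) * (2 * R / δ * p) ^ 2 := by
        gcongr
        exact infDist_nonneg
    _ = (p / L) ^ 2 / Fintype.card ι := by field_simp; ring
    _ ≤ ‖v j k‖ ^ 2 / Fintype.card ι := by gcongr
    _ ≤ meanSqNorm (v · k) := norm_sq_div_card_le_meanSqNorm (v · k) j

theorem exists_infDist_sq_succ_le [FiniteDimensional ℝ E] (h : IsPACA f ε x u v w)
    (hconv : ∀ i, ConvexOn ℝ univ (f i)) (hε : Antitone ε) {xhat : E} {δ : ℝ} {K : ℕ}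
    (hδ : 0 < δ) (hxhat : ∀ i, f i xhat ≤ -δ) (hK : ∀ k ≥ K, ε k ≤ δ / 2)
    (hact : ∀ k, ∃ i, 0 < f i (x k) + ε k) :
    ∃ β > 0, ∀ k ≥ K, infDist (x (k + 1)) (sublevel f (-ε (k + 1))) ^ 2 ≤
      (1 - β) * infDist (x k) (sublevel f (-ε k)) ^ 2 := by
  have hcont : ∀ i, Continuous (f i) := fun i =>
    continuousOn_univ.1 ((hconv i).continuousOn isOpen_univ)
  have hxhatC : ∀ k ≥ K, xhat ∈ sublevel f (-ε k) := fun k hk i => by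
    linarith [hxhat i, hK k hk]
  set R := ‖x K - xhat‖ + 1
  have hxR : ∀ k ≥ K, ‖x k - xhat‖ ≤ R := fun k hk =>
    (h.norm_sub_le hxhatC hact k hk).trans (le_add_of_nonneg_right zero_le_one)
  obtain ⟨L, hL, huL⟩ := exists_norm_subgradient_le hcont xhat R
  have hcard : 0 < (Fintype.card ι : ℝ) :=
    Nat.cast_pos.2 (Fintype.card_pos_iff.2 ⟨(hact 0).choose⟩)
  refine ⟨δ ^ 2 / (4 * Fintype.card ι * R ^ 2 * L ^ 2), by positivity, fun k hk => ?_⟩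
  have hprogress := h.mul_infDist_sq_le_meanSqNorm hconv hδ (by positivity) hL hxhat (hK k hk)
    (hxR k hk) (fun i => huL i (x k) (mem_closedBall_iff_norm.2 (hxR k hk)) (u i k)
      (h.subgradient i k)) (hact k)
  linarith [h.infDist_sq_succ_le hcont (hε k.le_succ) ⟨xhat, hxhatC k hk⟩ (hact k)]

end IsPACA

theorem stmt_16_general {n m : ℕ}
    (f : Fin m → EuclideanSpace ℝ (Fin n) → ℝ)
    (hconv : ∀ i, ConvexOn ℝ Set.univ (f i))
    (xhat : EuclideanSpace ℝ (Fin n)) (hslater : ∀ i, f i xhat < 0)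
    (ε : ℕ → ℝ) (hεpos : ∀ k, 0 < ε k) (hεanti : StrictAnti ε)
    (hεlim : Tendsto ε atTop (nhds 0))
    (x : ℕ → EuclideanSpace ℝ (Fin n))
    (u v : Fin m → ℕ → EuclideanSpace ℝ (Fin n))
    (w : ℕ → EuclideanSpace ℝ (Fin n))
    (hsub : ∀ i k, ∀ z, f i (x k) + ⟪u i k, z - x k⟫ ≤ f i z)
    (hv : ∀ i k, v i k = (max 0 (f i (x k) + ε k) / ‖u i k‖ ^ 2) • u i k)
    (hw : ∀ k, w k = (m : ℝ)⁻¹ • ∑ i, v i k)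
    (hstep : ∀ k, w k ≠ 0 →
      x (k + 1) = x k - (((m : ℝ)⁻¹ * ∑ i, ‖v i k‖ ^ 2) / ‖w k‖ ^ 2) • w k)
    (hinfinite : ∀ k, ∃ i, 0 < f i (x k)) :
    limsup (fun k =>
      Metric.infDist (x k) {z : EuclideanSpace ℝ (Fin n) | ∀ i, f i z ≤ 0} ^ (1 / (k : ℝ)))
      atTop < 1 := by
  have hP : IsPACA f ε x u v w :=
    ⟨hsub, hv, fun k => by rw [hw k, meanVec, Fintype.card_fin],
      fun k hk => by rw [hstep k hk, meanSqNorm, Fintype.card_fin]⟩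
  have : Nonempty (Fin m) := ⟨(hinfinite 0).choose⟩
  obtain ⟨i₀, hi₀⟩ := Finite.exists_max fun i => f i xhat
  obtain ⟨δ, hδ, hxhat⟩ : ∃ δ > 0, ∀ i, f i xhat ≤ -δ :=
    ⟨-f i₀ xhat, neg_pos.2 (hslater i₀), fun i => by linarith [hi₀ i]⟩
  obtain ⟨K, hK⟩ : ∃ K, ∀ k ≥ K, ε k ≤ δ / 2 :=
    eventually_atTop.1 (hεlim.eventually (ge_mem_nhds (half_pos hδ)))
  have hact : ∀ k, ∃ i, 0 < f i (x k) + ε k := fun k =>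
    (hinfinite k).imp fun i hi => by linarith [hεpos k]
  obtain ⟨β, hβ, hcontract⟩ :=
    hP.exists_infDist_sq_succ_le hconv hεanti.antitone hδ hxhat hK hact
  obtain ⟨A, hA, r, hr0, hr1, hdecay⟩ :=
    exists_le_mul_pow_of_sq_succ_le (d := fun k => infDist (x k) (sublevel f (-ε k)))
      (fun k => infDist_nonneg) hβ hcontract
  refine limsup_rpow_inv_lt_one_of_le_mul_pow (fun k => infDist_nonneg) hA hr0 hr1 ?_
  filter_upwards [eventually_ge_atTop K] with k hk
  refine (infDist_le_infDist_of_subset (sublevel_mono (neg_nonpos.2 (hεpos k).le)) ?_).trans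
    (hdecay k hk)
  exact ⟨xhat, fun i => by linarith [hxhat i, hK k hk]⟩

theorem stmt_16 {n m : ℕ} (hm : 0 < m)
    (f : Fin m → EuclideanSpace ℝ (Fin n) → ℝ)
    (hconv : ∀ i, ConvexOn ℝ Set.univ (f i))
    (xhat : EuclideanSpace ℝ (Fin n)) (hslater : ∀ i, f i xhat < 0)
    (ε : ℕ → ℝ) (hεpos : ∀ k, 0 < ε k) (hεanti : StrictAnti ε)
    (hεlim : Tendsto ε atTop (nhds 0))
    (x : ℕ → EuclideanSpace ℝ (Fin n))
    (u v : Fin m → ℕ → EuclideanSpace ℝ (Fin n))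
    (w : ℕ → EuclideanSpace ℝ (Fin n))
    (hsub : ∀ i k, ∀ z, f i (x k) + ⟪u i k, z - x k⟫ ≤ f i z)
    (hune : ∀ i k, 0 < f i (x k) + ε k → u i k ≠ 0)
    (hv : ∀ i k, v i k = (max 0 (f i (x k) + ε k) / ‖u i k‖ ^ 2) • u i k)
    (hw : ∀ k, w k = (m : ℝ)⁻¹ • ∑ i, v i k)
    (hstep0 : ∀ k, w k = 0 → x (k + 1) = x k)
    (hstep : ∀ k, w k ≠ 0 →
      x (k + 1) = x k - (((m : ℝ)⁻¹ * ∑ i, ‖v i k‖ ^ 2) / ‖w k‖ ^ 2) • w k)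
    (hinfinite : ∀ k, ∃ i, 0 < f i (x k)) :
    limsup (fun k =>
      Metric.infDist (x k) {z : EuclideanSpace ℝ (Fin n) | ∀ i, f i z ≤ 0} ^ (1 / (k : ℝ)))
      atTop < 1 :=
  stmt_16_general f hconv xhat hslater ε hεpos hεanti hεlim x u v w hsub hv hw hstep hinfinite
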